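/- Let p be a prime and F/K a finite Galois extension of number fields whose Galois group G is a p-group. Let t = dim_{𝔽_p} N'_G(𝓔_F), where N'_G : 𝓔_F → 𝓔_K is induced by the norm N_{F/K}. Then t_G(𝓔_F) ≤ t ≤ t_G(𝓔_F) + dim_{𝔽_p}((𝒪_K^× ∩ (𝒪_F^×)^p)/(𝒪_K^×)^p). In particular, if 𝒪_K^× ∩ (𝒪_F^×)^p = (𝒪_K^×)^p, then t = t_G(𝓔_F). -/

import Mathlib

/-!
Let `ν = ∑_{σ ∈ G} σ ∈ 𝔽_p[G]`. Since `G` is a `p`-group, `G` acting on a nonzero left ideal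
`J` of `𝔽_p[G]` has a nonzero fixed point, which is a multiple of `ν`; so `ν ∈ J`. Hence `ν` kills
every torsion module, while `ν 𝔽_p[G] = 𝔽_p ν`, so `ν 𝓔_F` has order `p ^ t_G`. On `𝓔_F`, `ν`
acts as `ι ∘ N'_G`, where `ι : 𝓔_K → 𝓔_F` is induced by inclusion and has kernel
`(𝒪_K^× ∩ (𝒪_F^×)^p)/(𝒪_K^×)^p`. Restricting `ι` to `N'_G(𝓔_F)` gives
`p ^ t = p ^ t_G * c` with `1 ≤ c ≤ p ^ b`.
-/

open NumberField

/-- `𝓔_L`: the units of the ring of integers modulo `p`-th powers. -/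
abbrev UnitsModP (p : ℕ) (F : Type*) [Field F] [NumberField F] : Type _ :=
  (𝓞 F)ˣ ⧸ (powMonoidHom p : (𝓞 F)ˣ →* (𝓞 F)ˣ).range

/-- The subgroup `𝒪_K^× ∩ (𝒪_F^×)^p` of `𝒪_K^×`. -/
noncomputable abbrev unitsBecomingPthPowers (p : ℕ) (K F : Type*) [Field K] [Field F]
    [NumberField K] [NumberField F] [Algebra K F] : Subgroup (𝓞 K)ˣ :=
  Subgroup.comap (Units.map (algebraMap (𝓞 K) (𝓞 F)).toMonoidHom)
    (powMonoidHom p : (𝓞 F)ˣ →* (𝓞 F)ˣ).range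

/-- A module over a ring is torsion if every element is killed by a nonzero scalar. -/
def IsTorsionModule (R M : Type*) [Semiring R] [AddCommMonoid M] [Module R M] : Prop :=
  ∀ m : M, ∃ r : R, r ≠ 0 ∧ r • m = 0

namespace MonoidAlgebra

section Semiring

variable (k G : Type*) [Semiring k] [Fintype G]

noncomputable def normElement : MonoidAlgebra k G := ∑ g : G, single g 1

variable {k G}

@[simp]
lemma coeff_normElement (g : G) : (normElement k G).coeff g = 1 := by
  classical
  simp [normElement, coeff_sum, coeff_single, Finsupp.single_apply]

variable [Group G]

lemma normElement_mul (x : MonoidAlgebra k G) :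
    normElement k G * x = (∑ g : G, x.coeff g) • normElement k G := by
  ext g
  rw [coeff_smul_apply, coeff_normElement, smul_eq_mul, mul_one, normElement, Finset.sum_mul,
    coeff_sum, Finset.sum_apply']
  simp only [coeff_single_mul_apply, one_mul]
  exact Fintype.sum_equiv ((Equiv.inv G).trans (Equiv.mulRight g)) _ _ fun _ => rfl

lemma eq_coeff_one_smul_normElement_of_forall_single_mul (x : MonoidAlgebra k G)
    (hx : ∀ g : G, single g (1 : k) * x = x) : x = x.coeff 1 • normElement k G := by
  ext g
  rw [coeff_smul_apply, coeff_normElement, smul_eq_mul, mul_one]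
  calc x.coeff g = (single g 1 * x).coeff g := by rw [hx]
    _ = x.coeff 1 := by rw [coeff_single_mul_apply, one_mul, inv_mul_cancel]

end Semiring

section Field

variable {p : ℕ} [Fact p.Prime] {k G : Type*} [Field k] [Finite k] [CharP k p] [Group G]
  [Fintype G]

lemma normElement_mem_of_ne_bot (hG : IsPGroup p G)
    {J : Submodule (MonoidAlgebra k G) (MonoidAlgebra k G)} (hJ : J ≠ ⊥) : normElement k G ∈ J := by
  obtain ⟨h, hhJ, hh0⟩ := Submodule.exists_mem_ne_zero_of_ne_bot hJ
  have : Finite (MonoidAlgebra k G) := Module.finite_of_finite k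
  -- As `p ∣ #J`, `G` has a nonzero fixed point in `J`, and fixed points are multiples of `ν`.
  let _ : MulAction G J := MulAction.compHom J (of k G)
  have hcard : p ∣ Nat.card J := by
    have : addOrderOf (⟨h, hhJ⟩ : J) = p := by
      refine addOrderOf_eq_prime ?_ (by simpa using hh0)
      ext1
      change p • h = 0
      rw [← Nat.cast_smul_eq_nsmul k, CharP.cast_eq_zero, zero_smul]
    exact this ▸ addOrderOf_dvd_natCard _
  have hzero : (0 : J) ∈ MulAction.fixedPoints G J := fun _ => Subtype.ext (mul_zero _)
  obtain ⟨x, hx, hx0⟩ := hG.exists_fixed_point_of_prime_dvd_card_of_fixed_point J hcard hzero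
  have hxν := eq_coeff_one_smul_normElement_of_forall_single_mul (x : MonoidAlgebra k G)
    fun g => congrArg Subtype.val (hx g)
  set c := (x : MonoidAlgebra k G).coeff 1
  have hc : c ≠ 0 := fun hc => hx0 (Subtype.ext (by rw [hxν, hc, zero_smul]; rfl))
  rw [show normElement k G = c⁻¹ • (x : MonoidAlgebra k G) by
    rw [hxν, smul_smul, inv_mul_cancel₀ hc, one_smul]]
  exact J.smul_of_tower_mem _ x.2

lemma normElement_smul_eq_zero (hG : IsPGroup p G) {M : Type*} [AddCommMonoid M]
    [Module (MonoidAlgebra k G) M] {m : M} (hm : ∃ r : MonoidAlgebra k G, r ≠ 0 ∧ r • m = 0) :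
    normElement k G • m = 0 := by
  obtain ⟨r, hr0, hrm⟩ := hm
  have hspan : normElement k G ∈ Submodule.span (MonoidAlgebra k G) {r} :=
    normElement_mem_of_ne_bot hG (by rwa [Ne, Submodule.span_singleton_eq_bot])
  obtain ⟨a, ha⟩ := Submodule.mem_span_singleton.1 hspan
  rw [← ha, smul_assoc, hrm, smul_zero]

lemma card_range_normElement_smul (hG : IsPGroup p G) {ι M N : Type*} [Finite ι]
    [AddCommMonoid M] [Module (MonoidAlgebra k G) M]
    [AddCommMonoid N] [Module (MonoidAlgebra k G) N]
    (hN : IsTorsionModule (MonoidAlgebra k G) N)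
    (e : M ≃ₗ[MonoidAlgebra k G] (ι → MonoidAlgebra k G) × N) :
    Nat.card (Set.range (normElement k G • · : M → M)) = Nat.card k ^ Nat.card ι := by
  let embed : (ι → k) → M := fun c => e.symm (fun i => c i • normElement k G, 0)
  let augment : M → ι → k := fun m i => ∑ g : G, ((e m).1 i).coeff g
  have hfactor : (normElement k G • · : M → M) = embed ∘ augment := by
    funext m
    apply e.injective
    simp only [Function.comp_apply, embed, augment, LinearEquiv.apply_symm_apply, map_smul]
    refine Prod.ext (funext fun i => ?_) ?_
    · exact normElement_mul _
    · exact normElement_smul_eq_zero hG (hN _)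
  have hsurj : Function.Surjective augment := fun c =>
    ⟨e.symm (fun i => single 1 (c i), 0), by
      classical
      funext i
      simp [augment, coeff_single, Finsupp.single_apply]⟩
  have hinj : Function.Injective embed := fun c c' h => by
    funext i
    have := congrArg (fun m => ((e m).1 i).coeff 1) h
    simpa [embed] using this
  rw [hfactor, hsurj.range_comp, Nat.card_range_of_injective hinj, Nat.card_fun]

end Field

end MonoidAlgebra

namespace Subgroup

variable {G G' : Type*} [Group G] [Group G']

theorem card_eq_card_map_mul_card_subgroupOf_ker (f : G →* G') (H : Subgroup G) :
    Nat.card H = Nat.card (H.map f) * Nat.card (f.ker.subgroupOf H) := by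
  rw [← (f.domRestrict H).ker.card_mul_index, index_ker, MonoidHom.domRestrict_range,
    MonoidHom.ker_domRestrict, mul_comm]

theorem card_subgroupOf_le (K : Subgroup G) [Finite K] (H : Subgroup G) :
    Nat.card (K.subgroupOf H) ≤ Nat.card K :=
  Nat.card_le_card_of_injective (fun x => ⟨x.1.1, x.2⟩) fun _ _ h =>
    Subtype.ext (Subtype.ext (congrArg Subtype.val h :))

end Subgroup

theorem QuotientGroup.card_ker_map {G H : Type*} [Group G] [Group H] (N : Subgroup G) [N.Normal]
    (M : Subgroup H) [M.Normal] (f : G →* H) (h : N ≤ M.comap f) :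
    Nat.card (map N M f h).ker = Nat.card (M.comap f ⧸ N.subgroupOf (M.comap f)) := by
  let θ := (mk' N).comp (M.comap f).subtype
  have hker : θ.ker = N.subgroupOf (M.comap f) := by
    rw [← MonoidHom.comap_ker, ker_mk']
    rfl
  calc Nat.card (map N M f h).ker = Nat.card θ.range := by
        rw [ker_map, MonoidHom.range_comp, Subgroup.range_subtype]
    _ = _ := by rw [← Subgroup.index_ker, hker]; rfl

theorem Nat.le_and_le_add_of_pow_eq_pow_mul {p s t b c : ℕ} (hp : 1 < p) (h : p ^ t = p ^ s * c)
    (hc : c ≤ p ^ b) : s ≤ t ∧ t ≤ s + b := by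
  have hc0 : c ≠ 0 := by rintro rfl; simp [(zero_lt_one.trans hp).ne'] at h
  constructor
  · rw [← Nat.pow_le_pow_iff_right hp, h]
    exact Nat.le_mul_of_pos_right _ (Nat.pos_of_ne_zero hc0)
  · rw [← Nat.pow_le_pow_iff_right hp, h, pow_add]
    exact Nat.mul_le_mul_left _ hc

theorem RingOfIntegers.algebraMap_norm_eq_prod_galRestrict {K F : Type*} [Field K] [Field F]
    [NumberField K] [NumberField F] [Algebra K F] [IsGalois K F] (x : 𝓞 F) :
    algebraMap (𝓞 K) (𝓞 F) (RingOfIntegers.norm K x) =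
      ∏ σ : F ≃ₐ[K] F, galRestrict (𝓞 K) K F (𝓞 F) σ x := by
  apply RingOfIntegers.ext
  rw [RingOfIntegers.coe_algebraMap_norm, Algebra.norm_eq_prod_automorphisms]
  simp only [RingOfIntegers.coe_eq_algebraMap, map_prod, algebraMap_galRestrict_apply]

namespace UnitsModP

variable (p : ℕ) (K F : Type*) [Field K] [Field F] [NumberField K] [NumberField F] [Algebra K F]

noncomputable def map : UnitsModP p K →* UnitsModP p F :=
  QuotientGroup.map _ _ (Units.map (algebraMap (𝓞 K) (𝓞 F)).toMonoidHom) <| by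
    rintro _ ⟨v, rfl⟩
    exact ⟨Units.map (algebraMap (𝓞 K) (𝓞 F)).toMonoidHom v, (map_pow _ v p).symm⟩

/-- Defined on `(𝓞 F)ˣ` rather than on `𝓔_F`; its range is `N'_G(𝓔_F)`. -/
noncomputable def norm : (𝓞 F)ˣ →* UnitsModP p K :=
  (QuotientGroup.mk' _).comp (Units.map (RingOfIntegers.norm K : 𝓞 F →* 𝓞 K))

theorem card_ker_map :
    Nat.card (map p K F).ker = Nat.card (unitsBecomingPthPowers p K F ⧸
      ((powMonoidHom p : (𝓞 K)ˣ →* (𝓞 K)ˣ).range.subgroupOf (unitsBecomingPthPowers p K F))) :=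
  QuotientGroup.card_ker_map _ _ _ _

variable [Module (MonoidAlgebra (ZMod p) (F ≃ₐ[K] F)) (Additive (UnitsModP p F))]

def IsGaloisCompatible : Prop :=
  ∀ (σ : F ≃ₐ[K] F) (u u' : (𝓞 F)ˣ),
    algebraMap (𝓞 F) F (u' : 𝓞 F) = σ (algebraMap (𝓞 F) F (u : 𝓞 F)) →
      MonoidAlgebra.single σ (1 : ZMod p) • Additive.ofMul (QuotientGroup.mk u : UnitsModP p F)
        = Additive.ofMul (QuotientGroup.mk u' : UnitsModP p F)

variable {p K F} [IsGalois K F]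

theorem ofMul_map_norm (hcompat : IsGaloisCompatible p K F) (u : (𝓞 F)ˣ) :
    Additive.ofMul (map p K F (norm p K F u)) =
      MonoidAlgebra.normElement (ZMod p) (F ≃ₐ[K] F) •
        Additive.ofMul (QuotientGroup.mk u : UnitsModP p F) := by
  let conj (σ : F ≃ₐ[K] F) : (𝓞 F)ˣ := Units.map (galRestrict (𝓞 K) K F (𝓞 F) σ).toMonoidHom u
  have hnorm : Units.map (algebraMap (𝓞 K) (𝓞 F)).toMonoidHom
      (Units.map (RingOfIntegers.norm K : 𝓞 F →* 𝓞 K) u) = ∏ σ, conj σ := by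
    ext
    simp [conj, Units.coe_prod, RingOfIntegers.algebraMap_norm_eq_prod_galRestrict]
  have hconj (σ : F ≃ₐ[K] F) :
      algebraMap (𝓞 F) F (conj σ : 𝓞 F) = σ (algebraMap (𝓞 F) F (u : 𝓞 F)) :=
    algebraMap_galRestrict_apply (𝓞 K) σ (u : 𝓞 F)
  rw [MonoidAlgebra.normElement, Finset.sum_smul, map, norm]
  simp only [MonoidHom.comp_apply, QuotientGroup.mk'_apply, QuotientGroup.map_mk, hnorm,
    QuotientGroup.mk_prod, ofMul_prod, hcompat _ u _ (hconj _)]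

theorem card_range_map_comp_norm (hcompat : IsGaloisCompatible p K F) :
    Nat.card ((map p K F).comp (norm p K F)).range = Nat.card (Set.range
      (MonoidAlgebra.normElement (ZMod p) (F ≃ₐ[K] F) • · : Additive (UnitsModP p F) → _)) := by
  have hsurj : Function.Surjective fun u : (𝓞 F)ˣ =>
      Additive.ofMul (QuotientGroup.mk u : UnitsModP p F) :=
    Additive.ofMul.surjective.comp (QuotientGroup.mk'_surjective _)
  rw [← hsurj.range_comp]
  simp only [Function.comp_def, ← ofMul_map_norm hcompat]
  rw [Set.range_comp', Nat.card_image_of_injective Additive.ofMul.injective]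
  rfl

end UnitsModP

theorem stmt_5_general (p : ℕ) [Fact p.Prime] (K F : Type) [Field K] [Field F]
    [NumberField K] [NumberField F] [Algebra K F] [IsGalois K F]
    (hpgroup : IsPGroup p (F ≃ₐ[K] F))
    [Module (MonoidAlgebra (ZMod p) (F ≃ₐ[K] F)) (Additive (UnitsModP p F))]
    (hcompat : ∀ (σ : F ≃ₐ[K] F) (u u' : (𝓞 F)ˣ),
      algebraMap (𝓞 F) F (u' : 𝓞 F) = σ (algebraMap (𝓞 F) F (u : 𝓞 F)) →
      MonoidAlgebra.single σ (1 : ZMod p) • Additive.ofMul (QuotientGroup.mk u : UnitsModP p F)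
        = Additive.ofMul (QuotientGroup.mk u' : UnitsModP p F))
    (tG : ℕ) (N : Type) [AddCommGroup N]
    [Module (MonoidAlgebra (ZMod p) (F ≃ₐ[K] F)) N]
    (hN : IsTorsionModule (MonoidAlgebra (ZMod p) (F ≃ₐ[K] F)) N)
    (e : Additive (UnitsModP p F) ≃ₗ[MonoidAlgebra (ZMod p) (F ≃ₐ[K] F)]
      (Fin tG → MonoidAlgebra (ZMod p) (F ≃ₐ[K] F)) × N)
    -- `t = dim_{𝔽_p} N'_G(𝓔_F)`
    (t : ℕ)
    (ht : Nat.card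
      (((QuotientGroup.mk' ((powMonoidHom p : (𝓞 K)ˣ →* (𝓞 K)ˣ).range)).comp
        (Units.map (RingOfIntegers.norm K : 𝓞 F →* 𝓞 K))).range) = p ^ t)
    -- `b = dim_{𝔽_p} (𝒪_K^× ∩ (𝒪_F^×)^p)/(𝒪_K^×)^p`
    (b : ℕ)
    (hb : Nat.card
      (unitsBecomingPthPowers p K F ⧸
        ((powMonoidHom p : (𝓞 K)ˣ →* (𝓞 K)ˣ).range.subgroupOf
          (unitsBecomingPthPowers p K F))) = p ^ b) :
    tG ≤ t ∧ t ≤ tG + b ∧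
      (unitsBecomingPthPowers p K F = (powMonoidHom p : (𝓞 K)ˣ →* (𝓞 K)ˣ).range →
        t = tG) := by
  have hp : 1 < p := (Fact.out : p.Prime).one_lt
  set φ := UnitsModP.map p K F
  set Nm := UnitsModP.norm p K F
  have hν : Nat.card (φ.comp Nm).range = p ^ tG := by
    rw [UnitsModP.card_range_map_comp_norm hcompat,
      MonoidAlgebra.card_range_normElement_smul hpgroup hN e, Nat.card_zmod, Nat.card_fin]
  have hker : Nat.card φ.ker = p ^ b := (UnitsModP.card_ker_map p K F).trans hb
  have : Finite φ.ker :=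
    Nat.finite_of_card_ne_zero (hker ▸ (pow_pos (zero_lt_one.trans hp) b).ne')
  have hcount : p ^ t = p ^ tG * Nat.card (φ.ker.subgroupOf Nm.range) := by
    rw [← ht, ← hν, MonoidHom.range_comp φ Nm]
    exact Nm.range.card_eq_card_map_mul_card_subgroupOf_ker φ
  obtain ⟨hle, hle_add⟩ :=
    Nat.le_and_le_add_of_pow_eq_pow_mul hp hcount (hker ▸ φ.ker.card_subgroupOf_le _)
  refine ⟨hle, hle_add, fun heq => ?_⟩
  have hb0 : p ^ b = 1 := by
    rw [← hb, ← Subgroup.index, Subgroup.subgroupOf_eq_top.2 heq.le, Subgroup.index_top]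
  rw [Nat.pow_eq_one] at hb0
  omega

/-- Let `F/K` be a finite Galois extension of number fields whose Galois group `G` is a
`p`-group, and let `𝓔_F = 𝒪_F^×/(𝒪_F^×)^p` with its natural `𝔽_p[G]`-module structure
(axiomatised by `hcompat`).  Given a decomposition `𝓔_F ≅ 𝔽_p[G]^{tG} ⊕ N` with `N`
torsion, and letting `t = dim_{𝔽_p} N'_G(𝓔_F)` (encoded by `#N'_G(𝓔_F) = p^t`) and
`b = dim_{𝔽_p} (𝒪_K^× ∩ (𝒪_F^×)^p)/(𝒪_K^×)^p` (encoded similarly), one has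
`tG ≤ t ≤ tG + b`; and if `𝒪_K^× ∩ (𝒪_F^×)^p = (𝒪_K^×)^p` then `t = tG`. -/
theorem stmt_5 (p : ℕ) [Fact p.Prime] (K F : Type) [Field K] [Field F]
    [NumberField K] [NumberField F] [Algebra K F] [IsGalois K F] [FiniteDimensional K F]
    (hpgroup : IsPGroup p (F ≃ₐ[K] F))
    [Module (MonoidAlgebra (ZMod p) (F ≃ₐ[K] F)) (Additive (UnitsModP p F))]
    (hcompat : ∀ (σ : F ≃ₐ[K] F) (u u' : (𝓞 F)ˣ),
      algebraMap (𝓞 F) F (u' : 𝓞 F) = σ (algebraMap (𝓞 F) F (u : 𝓞 F)) →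
      MonoidAlgebra.single σ (1 : ZMod p) • Additive.ofMul (QuotientGroup.mk u : UnitsModP p F)
        = Additive.ofMul (QuotientGroup.mk u' : UnitsModP p F))
    (tG : ℕ) (N : Type) [AddCommGroup N]
    [Module (MonoidAlgebra (ZMod p) (F ≃ₐ[K] F)) N]
    (hN : IsTorsionModule (MonoidAlgebra (ZMod p) (F ≃ₐ[K] F)) N)
    (e : Additive (UnitsModP p F) ≃ₗ[MonoidAlgebra (ZMod p) (F ≃ₐ[K] F)]
      (Fin tG → MonoidAlgebra (ZMod p) (F ≃ₐ[K] F)) × N)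
    -- `t = dim_{𝔽_p} N'_G(𝓔_F)`
    (t : ℕ)
    (ht : Nat.card
      (((QuotientGroup.mk' ((powMonoidHom p : (𝓞 K)ˣ →* (𝓞 K)ˣ).range)).comp
        (Units.map (RingOfIntegers.norm K : 𝓞 F →* 𝓞 K))).range) = p ^ t)
    -- `b = dim_{𝔽_p} (𝒪_K^× ∩ (𝒪_F^×)^p)/(𝒪_K^×)^p`
    (b : ℕ)
    (hb : Nat.card
      (unitsBecomingPthPowers p K F ⧸
        ((powMonoidHom p : (𝓞 K)ˣ →* (𝓞 K)ˣ).range.subgroupOf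
          (unitsBecomingPthPowers p K F))) = p ^ b) :
    tG ≤ t ∧ t ≤ tG + b ∧
      (unitsBecomingPthPowers p K F = (powMonoidHom p : (𝓞 K)ˣ →* (𝓞 K)ˣ).range →
        t = tG) :=
  stmt_5_general p K F hpgroup hcompat tG N hN e t ht b hb
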